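/- arXiv:2211.11328 — 2 statements merged into one kernel-verified Lean document; each statement's English description precedes it below -/
import Mathlib

section
/- Cross-bucket Frobenius norm bound: Let S₁, S₂ ⊆ [-1/2, 1/2] be finite sets of frequencies with minimum pairwise wrap-around distance between S₁ and S₂ equal to w > 0, let D₁, D₂ be diagonal matrices with nonnegative entries whose traces are each at most λ, and let F_{S₁}, F_{S₂} be the matrices whose columns are the frequency vectors of S₁ and S₂ respectively. Then ‖D₁^{1/2} F_{S₁}^* F_{S₂} D₂^{1/2}‖_F ≤ C·λ/w for some universal constant C. -/
open Complex Finset Real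

/-!
With `z = exp(2πi(g - f))`, the inner product `v(f)^* v(g)` is the geometric sum `∑_{j<d} z^j`,
whose norm is at most `2 / ‖z - 1‖ = 1 / |sin(π(f - g))|`. Jordan's inequality bounds the sine
from below by twice the wrap-around distance, so every entry of `F_{S₁}^* F_{S₂}` is at most
`1 / (2w)`; summing the squared entries against the weights gives `lam² / (2w)²`.
-/

lemma norm_geom_sum_le_of_norm_eq_one {𝕜 : Type*} [NormedDivisionRing 𝕜] {z : 𝕜}
    (hz : ‖z‖ = 1) (hz₁ : z ≠ 1) (n : ℕ) :
    ‖∑ j ∈ range n, z ^ j‖ ≤ 2 / ‖z - 1‖ := by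
  rw [geom_sum_eq hz₁, norm_div]
  gcongr
  calc ‖z ^ n - 1‖ ≤ ‖z ^ n‖ + ‖(1 : 𝕜)‖ := norm_sub_le _ _
    _ = 2 := by rw [norm_pow, hz, one_pow, norm_one]; norm_num

lemma two_mul_le_sin_pi_mul {t : ℝ} (ht₀ : 0 ≤ t) (ht : t ≤ 1 / 2) :
    2 * t ≤ Real.sin (π * t) := by
  have h := Real.mul_le_sin (x := π * t) (by positivity) (by nlinarith [Real.pi_pos])
  rwa [← mul_assoc, div_mul_cancel₀ _ Real.pi_ne_zero] at h

lemma two_mul_min_abs_le_abs_sin_pi_mul (x : ℝ) :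
    2 * min |x| (1 - |x|) ≤ |Real.sin (π * x)| := by
  rcases lt_or_ge 1 |x| with hx | hx
  · linarith [min_le_right |x| (1 - |x|), abs_nonneg (Real.sin (π * x))]
  have h_even : |Real.sin (π * x)| = Real.sin (π * |x|) := by
    rw [← abs_of_nonneg (Real.sin_nonneg_of_nonneg_of_le_pi (by positivity)
      (by nlinarith [Real.pi_pos, abs_nonneg x] : π * |x| ≤ π))]
    rcases abs_choice x with h | h <;> simp [h, Real.sin_neg]
  rw [h_even]
  rcases le_total |x| (1 / 2) with h | h
  · exact (mul_le_mul_of_nonneg_left (min_le_left _ _) two_pos.le).trans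
      (two_mul_le_sin_pi_mul (abs_nonneg x) h)
  · rw [← Real.sin_pi_sub, show π - π * |x| = π * (1 - |x|) by ring]
    exact (mul_le_mul_of_nonneg_left (min_le_right _ _) two_pos.le).trans
      (two_mul_le_sin_pi_mul (by linarith) (by linarith))

lemma conj_exp_mul_exp_eq_pow (f g : ℝ) (j : ℕ) :
    (starRingEnd ℂ) (Complex.exp (2 * π * I * f * j)) * Complex.exp (2 * π * I * g * j) =
      Complex.exp (I * ↑(2 * π * (g - f))) ^ j := by
  rw [← Complex.exp_conj, ← Complex.exp_add, ← Complex.exp_nat_mul]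
  congr 1
  simp only [map_mul, conj_I, conj_ofReal, map_ofNat, map_natCast]
  push_cast
  ring

lemma norm_sum_conj_exp_mul_exp_le (d : ℕ) {f g w : ℝ} (hw : 0 < w)
    (hsep : w ≤ min |f - g| (1 - |f - g|)) :
    ‖∑ j : Fin d, (starRingEnd ℂ) (Complex.exp (2 * π * I * f * (j : ℕ))) *
        Complex.exp (2 * π * I * g * (j : ℕ))‖ ≤ 1 / (2 * w) := by
  set z := Complex.exp (I * ↑(2 * π * (g - f)))
  have hsum : ∑ j : Fin d, (starRingEnd ℂ) (Complex.exp (2 * π * I * f * (j : ℕ))) *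
      Complex.exp (2 * π * I * g * (j : ℕ)) = ∑ j ∈ range d, z ^ j := by
    simp only [conj_exp_mul_exp_eq_pow]
    exact Fin.sum_univ_eq_sum_range (z ^ ·) d
  have hdist : 4 * w ≤ ‖z - 1‖ := by
    rw [norm_exp_I_mul_ofReal_sub_one, show 2 * π * (g - f) / 2 = -(π * (f - g)) by ring,
      Real.sin_neg, norm_mul, norm_neg, Real.norm_eq_abs, Real.norm_eq_abs, abs_two]
    linarith [two_mul_min_abs_le_abs_sin_pi_mul (f - g)]
  have hz₁ : z ≠ 1 := fun h => by simp [h] at hdist; linarith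
  calc _ = ‖∑ j ∈ range d, z ^ j‖ := by rw [hsum]
    _ ≤ 2 / ‖z - 1‖ := norm_geom_sum_le_of_norm_eq_one (norm_exp_I_mul_ofReal _) hz₁ d
    _ ≤ 2 / (4 * w) := by gcongr
    _ = 1 / (2 * w) := by field_simp; ring

lemma sum_sum_norm_sqrt_mul_sqrt_smul_sq_le {ι κ : Type*} (s : Finset ι) (t : Finset κ)
    {a : ι → ℝ} {b : κ → ℝ} (M : ι → κ → ℂ) {B : ℝ}
    (ha : ∀ i ∈ s, 0 ≤ a i) (hb : ∀ j ∈ t, 0 ≤ b j) (hM : ∀ i ∈ s, ∀ j ∈ t, ‖M i j‖ ≤ B) :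
    ∑ i ∈ s, ∑ j ∈ t, ‖((√(a i) * √(b j) : ℝ) : ℂ) * M i j‖ ^ 2 ≤
      (∑ i ∈ s, a i) * (∑ j ∈ t, b j) * B ^ 2 := by
  have hentry : ∀ i ∈ s, ∀ j ∈ t,
      ‖((√(a i) * √(b j) : ℝ) : ℂ) * M i j‖ ^ 2 ≤ a i * b j * B ^ 2 := fun i hi j hj => by
    rw [norm_mul, norm_real, Real.norm_eq_abs, mul_pow, sq_abs, mul_pow,
      Real.sq_sqrt (ha i hi), Real.sq_sqrt (hb j hj)]
    gcongr
    · exact mul_nonneg (ha i hi) (hb j hj)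
    · exact hM i hi j hj
  calc _ ≤ ∑ i ∈ s, ∑ j ∈ t, a i * b j * B ^ 2 :=
        sum_le_sum fun i hi => sum_le_sum fun j hj => hentry i hi j hj
    _ = _ := by rw [sum_mul_sum, sum_mul]; simp only [sum_mul]

/-- Cross-bucket Frobenius norm bound: there is a universal constant `C > 0`
such that for finite frequency sets `S₁, S₂ ⊆ [-1/2, 1/2]` whose minimum pairwise
wrap-around distance is at least `w > 0`, and nonnegative weights `a₁, a₂` with
`Σ_{S₁} a₁ ≤ lam` and `Σ_{S₂} a₂ ≤ lam`, the matrix `D₁^{1/2} F_{S₁}^* F_{S₂} D₂^{1/2}`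
(with entry `√(a₁ f)·√(a₂ g)·v(f)^* v(g)`) has Frobenius norm at most `C·lam/w`. -/
theorem cross_bucket_frobenius_bound :
    ∃ C : ℝ, 0 < C ∧
      ∀ (d : ℕ) (S₁ S₂ : Finset ℝ) (a₁ a₂ : ℝ → ℝ) (lam w : ℝ),
        (∀ f ∈ S₁, f ∈ Set.Icc (-(1 / 2) : ℝ) (1 / 2)) →
        (∀ g ∈ S₂, g ∈ Set.Icc (-(1 / 2) : ℝ) (1 / 2)) →
        0 < w →
        (∀ f ∈ S₁, ∀ g ∈ S₂, w ≤ min |f - g| (1 - |f - g|)) →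
        (∀ f ∈ S₁, 0 ≤ a₁ f) → (∀ g ∈ S₂, 0 ≤ a₂ g) →
        (∑ f ∈ S₁, a₁ f) ≤ lam → (∑ g ∈ S₂, a₂ g) ≤ lam →
        Real.sqrt (∑ f ∈ S₁, ∑ g ∈ S₂,
            (‖((Real.sqrt (a₁ f) * Real.sqrt (a₂ g) : ℝ) : ℂ) *
              ∑ j : Fin d,
                (starRingEnd ℂ) (Complex.exp (2 * Real.pi * Complex.I * f * (j : ℕ))) *
                  Complex.exp (2 * Real.pi * Complex.I * g * (j : ℕ))‖) ^ 2)
          ≤ C * lam / w := by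
  refine ⟨1 / 2, by norm_num, fun d S₁ S₂ a₁ a₂ lam w _ _ hw hsep ha₁ ha₂ hl₁ hl₂ => ?_⟩
  have hsum_sq := sum_sum_norm_sqrt_mul_sqrt_smul_sq_le S₁ S₂ _ ha₁ ha₂
    fun f hf g hg => norm_sum_conj_exp_mul_exp_le d hw (hsep f hf g hg)
  have hlam : 0 ≤ lam := (sum_nonneg ha₁).trans hl₁
  have hweights : (∑ f ∈ S₁, a₁ f) * (∑ g ∈ S₂, a₂ g) ≤ lam ^ 2 := by
    rw [sq]; exact mul_le_mul hl₁ hl₂ (sum_nonneg ha₂) hlam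
  calc _ ≤ √((lam * (1 / (2 * w))) ^ 2) := by
        gcongr
        refine hsum_sq.trans ?_
        rw [mul_pow]; gcongr
    _ = 1 / 2 * lam / w := by rw [Real.sqrt_sq (by positivity)]; field_simp
end

section
/- Bicriteria gap for 3×3 Toeplitz low-rank approximation: let T be the 3×3 symmetric Toeplitz matrix with first column (2,1,0). The best rank-1 approximation of T in Frobenius norm is T₁ = ((2+√2)/4)·[[1,√2,1],[√2,2,√2],[1,√2,1]], and the best rank-1 Toeplitz approximation of T is T_{1,toep} = (10/9)·J where J is the all-ones 3×3 matrix. Moreover ‖T - T_{1,toep}‖_F > ‖T - T₁‖_F. -/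
/-!
A rank-one matrix is an outer product `u vᵀ`, and
`‖M - u vᵀ‖_F² = ‖M‖_F² - 2 uᵀ M v + ‖u‖² ‖v‖²`. By Cauchy–Schwarz `uᵀ M v ≤ μ ‖u‖ ‖v‖`
as soon as `‖M v‖ ≤ μ ‖v‖` for all `v`, so the error is at least `‖M‖_F² - μ²`. For `T` one
may take `μ = 2 + √2`, its top eigenvalue, and `T₁` attains the bound.

A rank-one Toeplitz matrix with diagonal `a`, off-diagonals `b, d` and corners `c, e` has
`b d = a²` and `c e = a²` (vanishing `2 × 2` minors). Under these constraints the residual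
`3 (2 - a)² + 2 (1 - b)² + 2 (1 - d)² + c² + e²` is at least `44/9`, by a sum-of-squares
certificate that is tight at `a = b = c = d = e = 10/9`.
-/

open Finset Matrix

/-- Frobenius norm of a real 3×3 matrix. -/
noncomputable def frob (M : Matrix (Fin 3) (Fin 3) ℝ) : ℝ :=
  Real.sqrt (∑ i : Fin 3, ∑ j : Fin 3, (M i j) ^ 2)

/-- `M` is Toeplitz: entries depend only on `i - j`. -/
def IsToeplitz (M : Matrix (Fin 3) (Fin 3) ℝ) : Prop :=
  ∀ i j k l : Fin 3, (i : ℤ) - (j : ℤ) = (k : ℤ) - (l : ℤ) → M i j = M k l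

namespace Matrix

variable {m n : Type*} [Fintype n]

theorem exists_eq_vecMulVec_of_rank_le_one {K : Type*} [Field K] {B : Matrix m n K}
    (h : B.rank ≤ 1) : ∃ u v, B = vecMulVec u v := by
  classical
  obtain ⟨u, hu⟩ := finrank_le_one_iff.mp h
  have hcol : ∀ j, ∃ c : K, c • (u : m → K) = B *ᵥ Pi.single j 1 := fun j => by
    obtain ⟨c, hc⟩ := hu ⟨B *ᵥ Pi.single j 1, Pi.single j 1, rfl⟩
    exact ⟨c, congrArg Subtype.val hc⟩
  choose v hv using hcol
  refine ⟨u, v, Matrix.ext fun i j => ?_⟩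
  simpa [vecMulVec_apply, mul_comm] using (congrFun (hv j) i).symm

theorem mul_mul_eq_of_rank_le_one {K : Type*} [Field K] {B : Matrix m n K} (h : B.rank ≤ 1)
    (i k : m) (j l : n) : B i j * B k l = B i l * B k j := by
  obtain ⟨u, v, rfl⟩ := exists_eq_vecMulVec_of_rank_le_one h
  simp only [vecMulVec_apply]
  ring

variable [Fintype m]

theorem sum_sq_sub_vecMulVec (M : Matrix m n ℝ) (u : m → ℝ) (v : n → ℝ) :
    ∑ i, ∑ j, (M - vecMulVec u v) i j ^ 2 =
      ∑ i, ∑ j, M i j ^ 2 - 2 * (u ⬝ᵥ M *ᵥ v) + (∑ i, u i ^ 2) * ∑ j, v j ^ 2 := by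
  have expand : ∀ i j, (M - vecMulVec u v) i j ^ 2 =
      M i j ^ 2 - 2 * (u i * (M i j * v j)) + u i ^ 2 * v j ^ 2 := fun i j => by
    rw [Matrix.sub_apply, vecMulVec_apply]; ring
  rw [sum_mul_sum]
  simp only [expand, sum_add_distrib, sum_sub_distrib, dotProduct, mulVec, mul_sum]

theorem sum_sq_le_sum_sq_sub_vecMulVec_add_sq {M : Matrix m n ℝ} {μ : ℝ}
    (hM : ∀ v, ∑ i, (M *ᵥ v) i ^ 2 ≤ μ ^ 2 * ∑ j, v j ^ 2) (u : m → ℝ) (v : n → ℝ) :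
    ∑ i, ∑ j, M i j ^ 2 ≤ ∑ i, ∑ j, (M - vecMulVec u v) i j ^ 2 + μ ^ 2 := by
  rw [sum_sq_sub_vecMulVec]
  set U := ∑ i, u i ^ 2
  set V := ∑ j, v j ^ 2
  have hU : 0 ≤ U := by positivity
  have hV : 0 ≤ V := by positivity
  have hCS : (u ⬝ᵥ M *ᵥ v) ^ 2 ≤ μ ^ 2 * (U * V) :=
    calc (u ⬝ᵥ M *ᵥ v) ^ 2 ≤ U * ∑ i, (M *ᵥ v) i ^ 2 := sum_mul_sq_le_sq_mul_sq _ _ _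
      _ ≤ U * (μ ^ 2 * V) := mul_le_mul_of_nonneg_left (hM v) hU
      _ = μ ^ 2 * (U * V) := by ring
  nlinarith [sq_nonneg (U * V - μ ^ 2), mul_nonneg hU hV]

theorem sum_sq_le_sum_sq_sub_add_sq_of_rank_le_one {M B : Matrix m n ℝ} {μ : ℝ}
    (hM : ∀ v, ∑ i, (M *ᵥ v) i ^ 2 ≤ μ ^ 2 * ∑ j, v j ^ 2) (hB : B.rank ≤ 1) :
    ∑ i, ∑ j, M i j ^ 2 ≤ ∑ i, ∑ j, (M - B) i j ^ 2 + μ ^ 2 := by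
  obtain ⟨u, v, rfl⟩ := exists_eq_vecMulVec_of_rank_le_one hB
  exact sum_sq_le_sum_sq_sub_vecMulVec_add_sq hM u v

end Matrix

local notation "𝕋" => !![(2 : ℝ), 1, 0; 1, 2, 1; 0, 1, 2]
local notation "𝕋₁" => ((2 + √2) / 4 : ℝ) • !![1, √2, 1; √2, 2, √2; 1, √2, 1]
local notation "𝕁" => (!![1, 1, 1; 1, 1, 1; 1, 1, 1] : Matrix (Fin 3) (Fin 3) ℝ)

theorem sum_sq_tridiag : ∑ i, ∑ j, 𝕋 i j ^ 2 = 16 := by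
  simp only [Fin.sum_univ_three, of_apply, cons_val', cons_val_zero, cons_val_one,
    cons_val_fin_one, Matrix.cons_val]
  norm_num

theorem sum_sq_tridiag_mulVec_le (v : Fin 3 → ℝ) :
    ∑ i, (𝕋 *ᵥ v) i ^ 2 ≤ (2 + √2) ^ 2 * ∑ j, v j ^ 2 := by
  have hr : √2 ^ 2 = 2 := Real.sq_sqrt (by norm_num)
  simp only [Fin.sum_univ_three, mulVec, dotProduct, of_apply, cons_val', cons_val_zero,
    cons_val_one, cons_val_fin_one, Matrix.cons_val]
  -- `(2 + √2)² I - T²` has eigenvalues `0, 2 + 4√2, 8√2` on `(1, √2, 1), (1, 0, -1), (1, -√2, 1)`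
  linear_combination (1 + 2 * √2) * sq_nonneg (v 0 - v 2)
    + 2 * √2 * sq_nonneg (v 0 - √2 * v 1 + v 2)
    - (v 0 ^ 2 + v 2 ^ 2 + (1 - 2 * √2) * v 1 ^ 2 + 4 * v 1 * (v 0 + v 2)) * hr

theorem sum_sq_tridiag_sub_of_isToeplitz {B : Matrix (Fin 3) (Fin 3) ℝ} (hB : IsToeplitz B) :
    ∑ i, ∑ j, (𝕋 - B) i j ^ 2 =
      3 * (2 - B 0 0) ^ 2 + 2 * (1 - B 0 1) ^ 2 + 2 * (1 - B 1 0) ^ 2 + B 0 2 ^ 2 + B 2 0 ^ 2 := by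
  have h11 : B 1 1 = B 0 0 := hB _ _ _ _ (by decide)
  have h22 : B 2 2 = B 0 0 := hB _ _ _ _ (by decide)
  have h12 : B 1 2 = B 0 1 := hB _ _ _ _ (by decide)
  have h21 : B 2 1 = B 1 0 := hB _ _ _ _ (by decide)
  simp only [Fin.sum_univ_three, Matrix.sub_apply, of_apply, cons_val', cons_val_zero,
    cons_val_one, cons_val_fin_one, Matrix.cons_val, h11, h22, h12, h21]
  ring

theorem sum_sq_tridiag_sub_ge_of_isToeplitz {B : Matrix (Fin 3) (Fin 3) ℝ} (hB : IsToeplitz B)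
    (hrank : B.rank ≤ 1) : 44 / 9 ≤ ∑ i, ∑ j, (𝕋 - B) i j ^ 2 := by
  rw [sum_sq_tridiag_sub_of_isToeplitz hB]
  have hbd : B 0 1 * B 1 0 = B 0 0 ^ 2 := by
    rw [mul_mul_eq_of_rank_le_one hrank 0 1 1 0, hB 1 1 0 0 (by decide), sq]
  have hce : B 0 2 * B 2 0 = B 0 0 ^ 2 := by
    rw [mul_mul_eq_of_rank_le_one hrank 0 2 2 0, hB 2 2 0 0 (by decide), sq]
  -- `11 / 10` is the Lagrange multiplier of `(b + d)² ≥ 4 a²` at the optimum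
  linear_combination (11 / 10) * sq_nonneg (B 0 1 - B 1 0)
    + (27 / 5) * sq_nonneg (B 0 0 - 10 / 9)
    + (9 / 10) * sq_nonneg (B 0 1 + B 1 0 - 20 / 9) + sq_nonneg (B 0 2 - B 2 0)
    - (2 / 5) * hbd - 2 * hce

theorem T₁_eq_vecMulVec : 𝕋₁ = vecMulVec (((2 + √2) / 4 : ℝ) • ![1, √2, 1]) ![1, √2, 1] := by
  ext i j; fin_cases i <;> fin_cases j <;> simp [vecMulVec_apply, mul_assoc]

theorem sum_sq_tridiag_sub_T₁ : ∑ i, ∑ j, (𝕋 - 𝕋₁) i j ^ 2 = 16 - (2 + √2) ^ 2 := by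
  have hr : √2 ^ 2 = 2 := Real.sq_sqrt (by norm_num)
  simp only [Fin.sum_univ_three, Matrix.sub_apply, Matrix.smul_apply, smul_eq_mul,
    of_apply, cons_val', cons_val_zero, cons_val_one, cons_val_fin_one, Matrix.cons_val]
  linear_combination (2 + √2) ^ 2 / 4 * hr

theorem smul_ones_eq_vecMulVec (c : ℝ) : c • 𝕁 = vecMulVec (fun _ => c) (fun _ => 1) := by
  ext i j; fin_cases i <;> fin_cases j <;> simp [vecMulVec_apply]

theorem isToeplitz_smul_ones (c : ℝ) : IsToeplitz (c • 𝕁) := by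
  rw [smul_ones_eq_vecMulVec]
  exact fun _ _ _ _ _ => rfl

theorem sum_sq_tridiag_sub_smul_ones : ∑ i, ∑ j, (𝕋 - (10 / 9 : ℝ) • 𝕁) i j ^ 2 = 44 / 9 := by
  simp only [Fin.sum_univ_three, Matrix.sub_apply, Matrix.smul_apply, smul_eq_mul,
    of_apply, cons_val', cons_val_zero, cons_val_one, cons_val_fin_one, Matrix.cons_val]
  norm_num

/-- Bicriteria gap for 3×3 Toeplitz low-rank approximation: for
`T = [[2,1,0],[1,2,1],[0,1,2]]`, the matrix `T₁ = ((2+√2)/4)·[[1,√2,1],[√2,2,√2],[1,√2,1]]`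
is the best rank-≤1 approximation of `T` in Frobenius norm, the matrix
`T_{1,toep} = (10/9)·J` (all-ones `J`) is the best rank-≤1 Toeplitz approximation of `T`,
and `‖T - T_{1,toep}‖_F > ‖T - T₁‖_F`. -/
theorem bicriteria_gap_3x3
    (T : Matrix (Fin 3) (Fin 3) ℝ) (hT : T = !![2, 1, 0; 1, 2, 1; 0, 1, 2])
    (T₁ : Matrix (Fin 3) (Fin 3) ℝ)
    (hT₁ : T₁ = ((2 + Real.sqrt 2) / 4) •
      !![1, Real.sqrt 2, 1; Real.sqrt 2, 2, Real.sqrt 2; 1, Real.sqrt 2, 1])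
    (Ttoep : Matrix (Fin 3) (Fin 3) ℝ)
    (hTtoep : Ttoep = (10 / 9 : ℝ) • !![1, 1, 1; 1, 1, 1; 1, 1, 1]) :
    T₁.rank ≤ 1 ∧
    (∀ B : Matrix (Fin 3) (Fin 3) ℝ, B.rank ≤ 1 → frob (T - T₁) ≤ frob (T - B)) ∧
    Ttoep.rank ≤ 1 ∧ IsToeplitz Ttoep ∧
    (∀ B : Matrix (Fin 3) (Fin 3) ℝ, B.rank ≤ 1 → IsToeplitz B →
      frob (T - Ttoep) ≤ frob (T - B)) ∧
    frob (T - T₁) < frob (T - Ttoep) := by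
  subst hT hT₁ hTtoep
  refine ⟨by rw [T₁_eq_vecMulVec]; exact rank_vecMulVec_le _ _, fun B hB => ?_,
    by rw [smul_ones_eq_vecMulVec]; exact rank_vecMulVec_le _ _, isToeplitz_smul_ones _,
    fun B hB hBt => ?_, ?_⟩ <;> unfold frob
  · apply Real.sqrt_le_sqrt
    have hB_err := sum_sq_le_sum_sq_sub_add_sq_of_rank_le_one sum_sq_tridiag_mulVec_le hB
    rw [sum_sq_tridiag] at hB_err
    rw [sum_sq_tridiag_sub_T₁]
    linarith
  · exact Real.sqrt_le_sqrt
      (sum_sq_tridiag_sub_smul_ones ▸ sum_sq_tridiag_sub_ge_of_isToeplitz hBt hB)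
  · rw [sum_sq_tridiag_sub_T₁, sum_sq_tridiag_sub_smul_ones]
    have hr : √2 ^ 2 = 2 := Real.sq_sqrt (by norm_num)
    exact Real.sqrt_lt_sqrt (by nlinarith [Real.sqrt_nonneg 2]) (by nlinarith [Real.sqrt_nonneg 2])
end
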